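/- Let X₁, X₂, and Y be topological spaces and let φ be a homeomorphism of X₁ × X₂ onto a dense subset Z of Y. Suppose there is a continuous map ψ : Y → X₁ × X₂ such that ψ ∘ φ is the identity map of X₁ × X₂, and such that for each pair (M₁, M₂) of maximal limit sets of X₁ and X₂, ψ⁻¹(M₁ × M₂) equals the closure of φ(M₁ × M₂) in Y. Then the map Θ defined by Θ(M₁, M₂) := ψ⁻¹(M₁ × M₂) is a homeomorphism of ℳℒ(X₁) × ℳℒ(X₂) onto ℳℒ(Y). -/

import Mathlib

/-- `L` is a limit set if there is a net (equivalently, a proper filter) converging to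
every point of `L`. -/
def IsLimitSet {X : Type*} [TopologicalSpace X] (L : Set X) : Prop :=
  ∃ F : Filter X, F.NeBot ∧ ∀ x ∈ L, F ≤ nhds x

/-- A maximal limit set is a limit set not properly contained in any other limit set. -/
def IsMaxLimitSet {X : Type*} [TopologicalSpace X] (M : Set X) : Prop :=
  IsLimitSet M ∧ ∀ L : Set X, IsLimitSet L → M ⊆ L → L = M

/-- The lower Vietoris topology on `Set X`. -/
def lowerVietoris (X : Type*) [TopologicalSpace X] : TopologicalSpace (Set X) :=
  TopologicalSpace.generateFrom
    {V : Set (Set X) | ∃ U : Set X, IsOpen U ∧ V = {F : Set X | (F ∩ U).Nonempty}}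

/-- `ℳℒ(X)`: the space of maximal limit sets of `X`, with the subspace topology
inherited from the lower Vietoris topology. -/
def MLS (X : Type*) [TopologicalSpace X] : Type _ :=
  {M : Set X // IsMaxLimitSet M}

instance (X : Type*) [TopologicalSpace X] : TopologicalSpace (MLS X) :=
  TopologicalSpace.induced Subtype.val (lowerVietoris X)

/-!
Maximal limit sets of `X₁ × X₂` are exactly the products `M₁ × M₂` of maximal limit sets
(project a limit set to the factors and take the product back), and this identifies
`ℳℒ(X₁) × ℳℒ(X₂)` with `ℳℒ(X₁ × X₂)`. For a continuous retraction `ψ : Y → X` with continuous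
section `φ` and `ψ⁻¹(M) = cl φ(M)`, the maps `M ↦ ψ⁻¹(M)` and `N ↦ ψ(N)` are mutually inverse
on maximal limit sets: continuous images and closures of limit sets are limit sets, and by Zorn
every limit set lies in a maximal one. Both maps are lower-Vietoris continuous because a set
meets an open `U` iff its closure does.
-/

open Set Filter Topology Function

section

variable {X X₁ X₂ Y : Type*} [TopologicalSpace X] [TopologicalSpace X₁] [TopologicalSpace X₂]
  [TopologicalSpace Y]

theorem IsLimitSet.closure {L : Set X} (h : IsLimitSet L) : IsLimitSet (closure L) := by
  obtain ⟨F, hF, hle⟩ := h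
  refine ⟨F, hF, fun x hx s hs => ?_⟩
  obtain ⟨U, hUs, hUo, hxU⟩ := mem_nhds_iff.1 hs
  obtain ⟨y, hyU, hyL⟩ := mem_closure_iff.1 hx U hUo hxU
  exact mem_of_superset (hle y hyL (hUo.mem_nhds hyU)) hUs

theorem IsLimitSet.image {f : X → Y} (hf : Continuous f) {L : Set X} (h : IsLimitSet L) :
    IsLimitSet (f '' L) := by
  obtain ⟨F, hF, hle⟩ := h
  refine ⟨F.map f, map_neBot, ?_⟩
  rintro _ ⟨x, hx, rfl⟩
  exact (hf.tendsto x).mono_left (hle x hx)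

theorem IsLimitSet.prod {L₁ : Set X₁} {L₂ : Set X₂} (h₁ : IsLimitSet L₁) (h₂ : IsLimitSet L₂) :
    IsLimitSet (L₁ ×ˢ L₂) := by
  obtain ⟨F₁, hF₁, hle₁⟩ := h₁
  obtain ⟨F₂, hF₂, hle₂⟩ := h₂
  refine ⟨F₁ ×ˢ F₂, prod_neBot.2 ⟨hF₁, hF₂⟩, ?_⟩
  rintro ⟨x₁, x₂⟩ ⟨hx₁, hx₂⟩
  rw [nhds_prod_eq]
  exact prod_mono (hle₁ x₁ hx₁) (hle₂ x₂ hx₂)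

theorem IsLimitSet.sUnion_of_isChain {c : Set (Set X)} (hc : ∀ S ∈ c, IsLimitSet S)
    (hchain : IsChain (· ⊆ ·) c) (hne : c.Nonempty) : IsLimitSet (⋃₀ c) := by
  have : Nonempty c := hne.to_subtype
  have hdir : Directed (· ≥ ·) fun S : c => ⨅ x ∈ S.1, 𝓝 x :=
    hchain.directedOn.directed_val.mono_comp (g := fun S : Set X => ⨅ x ∈ S, 𝓝 x) _
      fun _ _ hST => biInf_mono hST
  refine ⟨_, iInf_neBot_of_directed' hdir fun S => ?_, ?_⟩
  · obtain ⟨F, hF, hle⟩ := hc S.1 S.2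
    exact hF.mono (le_iInf₂ hle)
  · rintro x ⟨S, hS, hx⟩
    exact (iInf_le _ ⟨S, hS⟩).trans (iInf₂_le x hx)

theorem IsLimitSet.exists_isMaxLimitSet_superset {L : Set X} (hL : IsLimitSet L) :
    ∃ M, IsMaxLimitSet M ∧ L ⊆ M := by
  obtain ⟨M, hLM, hM⟩ := zorn_subset_nonempty {S : Set X | IsLimitSet S}
    (fun c hc hchain hne => ⟨⋃₀ c, IsLimitSet.sUnion_of_isChain hc hchain hne,
      fun _ => subset_sUnion_of_mem⟩) L hL
  exact ⟨M, ⟨hM.prop, fun L' hL' hML' => (hM.2 hL' hML').antisymm hML'⟩, hLM⟩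

theorem IsMaxLimitSet.nonempty {M : Set X} (h : IsMaxLimitSet M) : M.Nonempty := by
  obtain ⟨⟨F, hF, -⟩, hmax⟩ := h
  obtain ⟨x⟩ : Nonempty X := nonempty_of_neBot F
  rw [nonempty_iff_ne_empty]
  rintro rfl
  exact singleton_ne_empty x
    (hmax {x} ⟨pure x, inferInstance, by rintro y rfl; exact pure_le_nhds y⟩ (empty_subset _))

theorem IsMaxLimitSet.prod {M₁ : Set X₁} {M₂ : Set X₂} (h₁ : IsMaxLimitSet M₁)
    (h₂ : IsMaxLimitSet M₂) : IsMaxLimitSet (M₁ ×ˢ M₂) := by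
  refine ⟨h₁.1.prod h₂.1, fun L hL hsub => ?_⟩
  obtain ⟨y₁, hy₁⟩ := h₁.nonempty
  obtain ⟨y₂, hy₂⟩ := h₂.nonempty
  have hfst : Prod.fst '' L = M₁ := h₁.2 _ (hL.image continuous_fst)
    fun x hx => ⟨(x, y₂), hsub ⟨hx, hy₂⟩, rfl⟩
  have hsnd : Prod.snd '' L = M₂ := h₂.2 _ (hL.image continuous_snd)
    fun x hx => ⟨(y₁, x), hsub ⟨hy₁, hx⟩, rfl⟩
  exact subset_antisymm (hfst ▸ hsnd ▸ subset_fst_image_prod_snd_image) hsub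

theorem IsMaxLimitSet.eq_image_fst_prod_image_snd {M : Set (X₁ × X₂)} (hM : IsMaxLimitSet M) :
    M = (Prod.fst '' M) ×ˢ (Prod.snd '' M) :=
  (hM.2 _ ((hM.1.image continuous_fst).prod (hM.1.image continuous_snd))
    subset_fst_image_prod_snd_image).symm

theorem IsMaxLimitSet.image_fst {M : Set (X₁ × X₂)} (hM : IsMaxLimitSet M) :
    IsMaxLimitSet (Prod.fst '' M) := by
  refine ⟨hM.1.image continuous_fst, fun L hL hsub => ?_⟩
  have hLM : L ×ˢ (Prod.snd '' M) = M := hM.2 _ (hL.prod (hM.1.image continuous_snd))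
    (hM.eq_image_fst_prod_image_snd.trans_subset (prod_mono hsub subset_rfl))
  rw [← hLM, fst_image_prod _ (hM.nonempty.image _)]

theorem IsMaxLimitSet.image_snd {M : Set (X₁ × X₂)} (hM : IsMaxLimitSet M) :
    IsMaxLimitSet (Prod.snd '' M) := by
  refine ⟨hM.1.image continuous_snd, fun L hL hsub => ?_⟩
  have hLM : (Prod.fst '' M) ×ˢ L = M := hM.2 _ ((hM.1.image continuous_fst).prod hL)
    (hM.eq_image_fst_prod_image_snd.trans_subset (prod_mono subset_rfl hsub))
  rw [← hLM, snd_image_prod (hM.nonempty.image _)]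

section Retraction

variable {φ : X → Y} {ψ : Y → X}

theorem isMaxLimitSet_preimage_of_leftInverse (hφ : Continuous φ) (hψ : Continuous ψ)
    (hretr : LeftInverse ψ φ) {M : Set X} (hM : IsMaxLimitSet M)
    (hcl : ψ ⁻¹' M = closure (φ '' M)) : IsMaxLimitSet (ψ ⁻¹' M) := by
  refine ⟨hcl ▸ (hM.1.image hφ).closure, fun L hL hsub => ?_⟩
  have hψL : ψ '' L = M := hM.2 _ (hL.image hψ) <|
    calc M = ψ '' (φ '' M) := (hretr.image_image M).symm
      _ ⊆ ψ '' L := image_mono (subset_closure.trans (hcl ▸ hsub))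
  exact subset_antisymm (image_subset_iff.1 hψL.subset) hsub

theorem IsMaxLimitSet.eq_preimage_image_of_leftInverse (hφ : Continuous φ) (hψ : Continuous ψ)
    (hretr : LeftInverse ψ φ)
    (hcl : ∀ M : Set X, IsMaxLimitSet M → ψ ⁻¹' M = closure (φ '' M))
    {N : Set Y} (hN : IsMaxLimitSet N) : IsMaxLimitSet (ψ '' N) ∧ N = ψ ⁻¹' (ψ '' N) := by
  obtain ⟨M, hM, hNM⟩ := (hN.1.image hψ).exists_isMaxLimitSet_superset
  have hN_eq : ψ ⁻¹' M = N := hN.2 _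
    (isMaxLimitSet_preimage_of_leftInverse hφ hψ hretr hM (hcl M hM)).1 (image_subset_iff.1 hNM)
  have hψN : ψ '' N = M := hN_eq ▸ image_preimage_eq M hretr.surjective
  exact ⟨hψN ▸ hM, by rw [hψN, hN_eq]⟩

end Retraction

namespace MLS

theorem isOpen_setOf_inter_nonempty {U : Set X} (hU : IsOpen U) :
    IsOpen {M : MLS X | (M.1 ∩ U).Nonempty} :=
  (isOpen_induced_iff (t := lowerVietoris X)).2
    ⟨{S : Set X | (S ∩ U).Nonempty}, TopologicalSpace.isOpen_generateFrom_of_mem ⟨U, hU, rfl⟩, rfl⟩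

theorem continuous_of_isOpen_setOf_inter_nonempty {A : Type*} [TopologicalSpace A]
    {f : A → MLS X} (h : ∀ U : Set X, IsOpen U → IsOpen {a | ((f a).1 ∩ U).Nonempty}) :
    Continuous f :=
  continuous_induced_rng.2 <| (continuous_generateFrom_iff (f := fun a => (f a).1)).2 <| by
    rintro _ ⟨U, hU, rfl⟩
    exact h U hU

theorem continuous_of_val_eq_image {f : Y → X} (hf : Continuous f) {g : MLS Y → MLS X}
    (hg : ∀ N, (g N).1 = f '' N.1) : Continuous g :=
  continuous_of_isOpen_setOf_inter_nonempty fun U hU => by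
    simpa only [hg, image_inter_nonempty_iff] using isOpen_setOf_inter_nonempty (hU.preimage hf)

theorem isOpen_setOf_prod_inter_nonempty {U : Set (X₁ × X₂)} (hU : IsOpen U) :
    IsOpen {p : MLS X₁ × MLS X₂ | (p.1.1 ×ˢ p.2.1 ∩ U).Nonempty} := by
  refine isOpen_iff_mem_nhds.2 ?_
  rintro p ⟨⟨x₁, x₂⟩, ⟨hx₁, hx₂⟩, hxU⟩
  obtain ⟨U₁, U₂, hU₁, hU₂, hx₁U, hx₂U, hsub⟩ := isOpen_prod_iff.1 hU x₁ x₂ hxU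
  filter_upwards [prod_mem_nhds ((isOpen_setOf_inter_nonempty hU₁).mem_nhds ⟨x₁, hx₁, hx₁U⟩)
    ((isOpen_setOf_inter_nonempty hU₂).mem_nhds ⟨x₂, hx₂, hx₂U⟩)]
  rintro q ⟨⟨y₁, hy₁, hy₁U⟩, ⟨y₂, hy₂, hy₂U⟩⟩
  exact ⟨(y₁, y₂), ⟨hy₁, hy₂⟩, hsub ⟨hy₁U, hy₂U⟩⟩

def prodHomeomorph : MLS X₁ × MLS X₂ ≃ₜ MLS (X₁ × X₂) where
  toFun p := ⟨p.1.1 ×ˢ p.2.1, p.1.2.prod p.2.2⟩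
  invFun N := (⟨_, N.2.image_fst⟩, ⟨_, N.2.image_snd⟩)
  left_inv p := Prod.ext (Subtype.ext (fst_image_prod _ p.2.2.nonempty))
    (Subtype.ext (snd_image_prod p.1.2.nonempty _))
  right_inv N := Subtype.ext N.2.eq_image_fst_prod_image_snd.symm
  continuous_toFun :=
    continuous_of_isOpen_setOf_inter_nonempty fun _ => isOpen_setOf_prod_inter_nonempty
  continuous_invFun := (continuous_of_val_eq_image continuous_fst fun _ => rfl).prodMk
    (continuous_of_val_eq_image continuous_snd fun _ => rfl)

def homeomorphOfLeftInverse {φ : X → Y} {ψ : Y → X} (hφ : Continuous φ) (hψ : Continuous ψ)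
    (hretr : LeftInverse ψ φ)
    (hcl : ∀ M : Set X, IsMaxLimitSet M → ψ ⁻¹' M = closure (φ '' M)) : MLS X ≃ₜ MLS Y where
  toFun M := ⟨ψ ⁻¹' M.1, isMaxLimitSet_preimage_of_leftInverse hφ hψ hretr M.2 (hcl _ M.2)⟩
  invFun N := ⟨ψ '' N.1, (N.2.eq_preimage_image_of_leftInverse hφ hψ hretr hcl).1⟩
  left_inv M := Subtype.ext (image_preimage_eq _ hretr.surjective)
  right_inv N := Subtype.ext (N.2.eq_preimage_image_of_leftInverse hφ hψ hretr hcl).2.symm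
  continuous_toFun := continuous_of_isOpen_setOf_inter_nonempty fun U hU => by
    have hmeets : ∀ M : MLS X, (ψ ⁻¹' M.1 ∩ U).Nonempty ↔ (M.1 ∩ φ ⁻¹' U).Nonempty := fun M => by
      rw [hcl _ M.2, closure_inter_open_nonempty_iff hU, image_inter_nonempty_iff]
    simpa only [hmeets] using isOpen_setOf_inter_nonempty (hU.preimage hφ)
  continuous_invFun := continuous_of_val_eq_image hψ fun _ => rfl

end MLS

end

theorem retraction_mls_homeomorph_general {X₁ X₂ Y : Type*} [TopologicalSpace X₁]
    [TopologicalSpace X₂] [TopologicalSpace Y] (φ : X₁ × X₂ → Y)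
    (hφ : Topology.IsEmbedding φ)
    (ψ : Y → X₁ × X₂) (hψ : Continuous ψ) (hretr : ψ ∘ φ = id)
    (hcl : ∀ (M₁ : Set X₁) (M₂ : Set X₂), IsMaxLimitSet M₁ → IsMaxLimitSet M₂ →
      ψ ⁻¹' (M₁ ×ˢ M₂) = closure (φ '' (M₁ ×ˢ M₂))) :
    ∃ Θ : MLS X₁ × MLS X₂ ≃ₜ MLS Y,
      ∀ p : MLS X₁ × MLS X₂, (Θ p).1 = ψ ⁻¹' (p.1.1 ×ˢ p.2.1) := by
  have hcl' : ∀ M : Set (X₁ × X₂), IsMaxLimitSet M → ψ ⁻¹' M = closure (φ '' M) := by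
    intro M hM
    rw [hM.eq_image_fst_prod_image_snd]
    exact hcl _ _ hM.image_fst hM.image_snd
  exact ⟨MLS.prodHomeomorph.trans
    (MLS.homeomorphOfLeftInverse hφ.continuous hψ (congrFun hretr) hcl'), fun _ => rfl⟩

/-- Lemma 3.1 (main retraction lemma): if `φ` is a homeomorphism of `X₁ × X₂` onto a
dense subset of `Y`, `ψ : Y → X₁ × X₂` is a continuous retraction (`ψ ∘ φ = id`), and
`ψ⁻¹(M₁ × M₂) = closure (φ(M₁ × M₂))` for all maximal limit sets `M₁`, `M₂`, then
`(M₁, M₂) ↦ ψ⁻¹(M₁ × M₂)` is a homeomorphism of `ℳℒ(X₁) × ℳℒ(X₂)` onto `ℳℒ(Y)`. -/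
theorem retraction_mls_homeomorph {X₁ X₂ Y : Type*} [TopologicalSpace X₁]
    [TopologicalSpace X₂] [TopologicalSpace Y] (φ : X₁ × X₂ → Y)
    (hφ : Topology.IsEmbedding φ) (hdense : DenseRange φ)
    (ψ : Y → X₁ × X₂) (hψ : Continuous ψ) (hretr : ψ ∘ φ = id)
    (hcl : ∀ (M₁ : Set X₁) (M₂ : Set X₂), IsMaxLimitSet M₁ → IsMaxLimitSet M₂ →
      ψ ⁻¹' (M₁ ×ˢ M₂) = closure (φ '' (M₁ ×ˢ M₂))) :
    ∃ Θ : MLS X₁ × MLS X₂ ≃ₜ MLS Y,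
      ∀ p : MLS X₁ × MLS X₂, (Θ p).1 = ψ ⁻¹' (p.1.1 ×ˢ p.2.1) :=
  retraction_mls_homeomorph_general φ hφ ψ hψ hretr hcl
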